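/- arXiv:2111.11908 — 8 statements merged into one kernel-verified Lean document; each statement's English description precedes it below -/
import Mathlib

section
/- Let A be a finite abelian p-group and x ∈ A a nontrivial element. Then x splits from A if and only if there is no y ∈ A such that the order of x·yᵖ is strictly smaller than the order of x. -/
/-!
If `A = ⟨x⟩ × H` and `y = xⁿh`, then `x * y ^ p = x ^ (1 + n p) * h ^ p` has order at least that
of `x ^ (1 + n p)`, which is the order of `x` because `1 + n p` is prime to `p`.

Conversely, let `q = orderOf x` and let `B` be the subgroup of `q`-th powers. If
`x ^ (q / p) = w ^ q`, then `y = w⁻¹` lowers the order of `x * y ^ p` to `q / p`; so under the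
hypothesis `x` keeps order `q` in `A ⧸ B`, a group of exponent dividing `q`. By duality of finite
abelian groups there is a character `χ : A ⧸ B →* ℂˣ` sending `x` to a primitive `q`-th root of
unity. Its values are `q`-th roots of unity, hence powers of `χ x`, and so the kernel of `χ` on `A`
is a complement of `⟨x⟩`.
-/

open Subgroup

theorem orderOf_dvd_orderOf_mul_of_disjoint {G : Type*} [CommGroup G] {K H : Subgroup G}
    (hKH : Disjoint K H) {a b : G} (ha : a ∈ K) (hb : b ∈ H) :
    orderOf a ∣ orderOf (a * b) := by
  refine orderOf_dvd_of_pow_eq_one (disjoint_iff_mul_eq_one.mp hKH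
    (pow_mem ha (orderOf (a * b))) (pow_mem hb (orderOf (a * b))) ?_).1
  rw [← mul_pow, pow_orderOf_eq_one]

theorem orderOf_le_orderOf_mul_pow {G : Type*} [CommGroup G] [Finite G] {p k : ℕ} {x : G}
    (hx : orderOf x = p ^ k) {H : Subgroup G} (hinf : zpowers x ⊓ H = ⊥)
    (hsup : zpowers x ⊔ H = ⊤) (y : G) : orderOf x ≤ orderOf (x * y ^ p) := by
  obtain ⟨_, hc, h, hh, rfl⟩ := mem_sup.mp (hsup ▸ mem_top y)
  obtain ⟨n, rfl⟩ := mem_powers_iff_mem_zpowers.mpr hc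
  have hcop : (orderOf x).Coprime (p * n + 1) :=
    hx ▸ ((Nat.coprime_mul_left_add_right p 1 n).mpr (Nat.coprime_one_right p)).pow_left k
  calc orderOf x = orderOf (x ^ (p * n + 1)) := hcop.orderOf_pow.symm
    _ ≤ orderOf (x ^ (p * n + 1) * h ^ p) :=
      Nat.le_of_dvd (orderOf_pos _) (orderOf_dvd_orderOf_mul_of_disjoint
        (disjoint_iff.mpr hinf) (pow_mem (mem_zpowers x) _) (pow_mem hh p))
    _ = orderOf (x * (x ^ n * h) ^ p) := by
      rw [mul_pow, ← mul_assoc, ← pow_mul, ← pow_succ', mul_comm n p]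

section Kernel

variable {G K : Type*} [Group G] [Group K] (f : G →* K) {x : G}

theorem zpowers_inf_ker_eq_bot (hfx : orderOf (f x) = orderOf x) : zpowers x ⊓ f.ker = ⊥ := by
  refine eq_bot_iff.mpr fun z hz ↦ ?_
  obtain ⟨hz, hfz⟩ := mem_inf.mp hz
  obtain ⟨n, rfl⟩ := mem_zpowers_iff.mp hz
  rwa [MonoidHom.mem_ker, map_zpow, ← orderOf_dvd_iff_zpow_eq_one, hfx,
    orderOf_dvd_iff_zpow_eq_one] at hfz

theorem zpowers_sup_ker_eq_top (hrange : f.range ≤ zpowers (f x)) :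
    zpowers x ⊔ f.ker = ⊤ := by
  refine eq_top_iff.mpr fun a _ ↦ ?_
  rw [← comap_map_eq, mem_comap, MonoidHom.map_zpowers]
  exact hrange ⟨a, rfl⟩

end Kernel

theorem Units.mem_zpowers_of_pow_orderOf_eq_one {R : Type*} [CommRing R] [IsDomain R]
    {u v : Rˣ} (hu : orderOf u ≠ 0) (hv : v ^ orderOf u = 1) : v ∈ zpowers u := by
  have : NeZero (orderOf u) := ⟨hu⟩
  rw [(IsPrimitiveRoot.orderOf u).zpowers_eq]
  exact (mem_rootsOfUnity _ _).mpr hv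

theorem CommGroup.exists_monoidHom_units_orderOf_eq {G : Type*} (M : Type*) [CommGroup G]
    [Finite G] [CommMonoid M] [HasEnoughRootsOfUnity M (Monoid.exponent G)] (x : G) :
    ∃ χ : G →* Mˣ, orderOf (χ x) = orderOf x := by
  have : HasEnoughRootsOfUnity M (orderOf x) := .of_dvd M (Monoid.order_dvd_exponent x)
  obtain ⟨ζ, hζ⟩ := HasEnoughRootsOfUnity.exists_primitiveRoot M (orderOf x)
  have hu := hζ.isUnit_unit (orderOf_pos x).ne'
  set u := (hζ.isUnit (orderOf_pos x).ne').unit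
  let gen : zpowers x := ⟨x, mem_zpowers x⟩
  have hgen : ∀ y, y ∈ zpowers gen := by
    rintro ⟨_, n, rfl⟩
    exact ⟨n, rfl⟩
  let φ : zpowers x →* Mˣ :=
    monoidHomOfForallMemZpowers hgen (g' := u) (by rw [orderOf_mk, ← hu.eq_orderOf])
  obtain ⟨χ, hχ⟩ := MonoidHom.domRestrict_surjective M (zpowers x) φ
  refine ⟨χ, ?_⟩
  have : χ x = φ gen := DFunLike.congr_fun hχ gen
  rw [this, monoidHomOfForallMemZpowers_apply_gen, ← hu.eq_orderOf]

theorem exists_complement_zpowers_of_orderOf_mk_eq {G : Type*} [CommGroup G] [Finite G] (x : G)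
    (hx : orderOf (x : G ⧸ (powMonoidHom (orderOf x)).range) = orderOf x) :
    ∃ H : Subgroup G, zpowers x ⊓ H = ⊥ ∧ zpowers x ⊔ H = ⊤ := by
  set π := QuotientGroup.mk' (powMonoidHom (α := G) (orderOf x)).range
  obtain ⟨χ, hχ⟩ := CommGroup.exists_monoidHom_units_orderOf_eq ℂ (π x)
  set f := χ.comp π
  have hfx : orderOf (f x) = orderOf x := hχ.trans hx
  refine ⟨f.ker, zpowers_inf_ker_eq_bot f hfx, zpowers_sup_ker_eq_top f ?_⟩
  rintro _ ⟨a, rfl⟩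
  have ha : a ^ orderOf x ∈ (powMonoidHom (orderOf x)).range := ⟨a, rfl⟩
  refine Units.mem_zpowers_of_pow_orderOf_eq_one (hfx ▸ (orderOf_pos x).ne') ?_
  rw [hfx, ← map_pow, MonoidHom.comp_apply, QuotientGroup.mk'_apply,
    (QuotientGroup.eq_one_iff _).mpr ha, map_one]

theorem exists_orderOf_mul_pow_lt {G : Type*} [CommGroup G] {p j : ℕ} (hp : 1 < p) {x w : G}
    (hx : orderOf x = p ^ (j + 1)) (hw : x ^ p ^ j = w ^ p ^ (j + 1)) :
    ∃ y, orderOf (x * y ^ p) < orderOf x := by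
  refine ⟨w⁻¹, ?_⟩
  have hpow : (x * w⁻¹ ^ p) ^ p ^ j = 1 := by
    rw [mul_pow, ← pow_mul, ← pow_succ', inv_pow, hw, mul_inv_cancel]
  calc orderOf (x * w⁻¹ ^ p) ≤ p ^ j := orderOf_le_of_pow_eq_one (by positivity) hpow
    _ < p ^ (j + 1) := Nat.pow_lt_pow_right hp j.lt_succ_self
    _ = orderOf x := hx.symm

theorem IsPGroup.orderOf_mk_pow_range_eq {G : Type*} [CommGroup G] {p : ℕ} [hp : Fact p.Prime]
    (hG : IsPGroup p G) {x : G} (hx : ∀ y, orderOf x ≤ orderOf (x * y ^ p)) :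
    orderOf (x : G ⧸ (powMonoidHom (orderOf x)).range) = orderOf x := by
  obtain ⟨k, hk⟩ := IsPGroup.iff_orderOf.mp hG x
  obtain ⟨i, hik, hi⟩ := (Nat.dvd_prime_pow hp.out).mp
    ((orderOf_map_dvd (QuotientGroup.mk' (powMonoidHom (α := G) (orderOf x)).range) x).trans
      hk.dvd)
  rw [QuotientGroup.mk'_apply] at hi
  rcases hik.eq_or_lt with rfl | hlt
  · rw [hi, hk]
  obtain ⟨j, rfl⟩ : ∃ j, k = j + 1 := ⟨k - 1, by omega⟩
  obtain ⟨w, hw⟩ : x ^ p ^ j ∈ (powMonoidHom (orderOf x)).range := by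
    rw [← QuotientGroup.eq_one_iff, QuotientGroup.mk_pow, ← orderOf_dvd_iff_pow_eq_one, hi]
    exact pow_dvd_pow p (by omega)
  rw [powMonoidHom_apply, hk] at hw
  obtain ⟨y, hy⟩ := exists_orderOf_mul_pow_lt hp.out.one_lt hk hw.symm
  exact absurd (hx y) hy.not_ge

theorem split_iff_no_smaller_order_mod_pth_powers_general {A : Type*} [CommGroup A] [Finite A]
    {p : ℕ} [Fact p.Prime] (hA : IsPGroup p A) (x : A) :
    (∃ H : Subgroup A, Subgroup.zpowers x ⊓ H = ⊥ ∧ Subgroup.zpowers x ⊔ H = ⊤) ↔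
      ¬ ∃ y : A, orderOf (x * y ^ p) < orderOf x := by
  obtain ⟨k, hk⟩ := IsPGroup.iff_orderOf.mp hA x
  constructor
  · rintro ⟨H, hinf, hsup⟩ ⟨y, hy⟩
    exact hy.not_ge (orderOf_le_orderOf_mul_pow hk hinf hsup y)
  · intro hx
    exact exists_complement_zpowers_of_orderOf_mk_eq x
      (hA.orderOf_mk_pow_range_eq fun y ↦ not_lt.mp fun hy ↦ hx ⟨y, hy⟩)

/-- A nontrivial element `x` of a finite abelian `p`-group `A` splits from `A`
(`A = ⟨x⟩ × H` for some subgroup `H`) iff there is no `y ∈ A` with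
`orderOf (x * y ^ p) < orderOf x`. -/
theorem split_iff_no_smaller_order_mod_pth_powers {A : Type*} [CommGroup A] [Finite A]
    {p : ℕ} [Fact p.Prime] (hA : IsPGroup p A) (x : A) (hx : x ≠ 1) :
    (∃ H : Subgroup A, Subgroup.zpowers x ⊓ H = ⊥ ∧ Subgroup.zpowers x ⊔ H = ⊤) ↔
      ¬ ∃ y : A, orderOf (x * y ^ p) < orderOf x :=
  split_iff_no_smaller_order_mod_pth_powers_general hA x
end

section
/- Let A be a finite abelian group with decomposition A = P₁ × ⋯ × Pₘ into its Sylow subgroups. A nontrivial element x = (x₁, …, xₘ) splits from A if and only if each xᵢ is either trivial or splits from Pᵢ. -/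
/-!
Each Sylow subgroup `Pᵢ` is the image of the power map `a ↦ a ^ eᵢ`, where `eᵢ` is chosen by
the Chinese remainder theorem to be `1` modulo the `pᵢ`-part of `|A|` and `0` modulo the rest,
so that this map fixes `Pᵢ` and kills the other Sylow subgroups. If `⟨x⟩ × H = A`, applying it
gives `⟨xᵢ⟩ × (H ∩ Pᵢ) = Pᵢ`. Conversely, complements `Kᵢ` of the `⟨xᵢ⟩` in the `Pᵢ` glue to
the complement `⨆ Kᵢ` of `⟨x⟩`: the `xᵢ` are powers of `x`, and projecting a power
`x ^ k ∈ ⨆ Kᵢ` to each `Pᵢ` shows `xᵢ ^ k = 1` for all `i`.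
-/

open Subgroup

theorem exists_pow_eq_self_and_pow_eq_one (G : Type*) [Group G] [Finite G] {p : ℕ}
    (hp : p.Prime) :
    ∃ e : ℕ, (∀ g : G, ∀ k, orderOf g ∣ p ^ k → g ^ e = g) ∧
      ∀ g : G, (orderOf g).Coprime p → g ^ e = 1 := by
  have hN : Nat.card G ≠ 0 := Nat.card_pos.ne'
  have hcompl := Nat.coprime_ordCompl hp hN
  obtain ⟨e, he1, he0⟩ :=
    Nat.chineseRemainder (hcompl.pow_left ((Nat.card G).factorization p)) 1 0
  have hdvd (g : G) : orderOf g ∣ ordProj[p] (Nat.card G) * ordCompl[p] (Nat.card G) := by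
    rw [Nat.ordProj_mul_ordCompl_eq_self]
    exact orderOf_dvd_natCard g
  refine ⟨e, fun g k hg => ?_, fun g hg => ?_⟩
  · obtain ⟨l, -, hl⟩ := (Nat.dvd_prime_pow hp).mp hg
    have hproj : orderOf g ∣ ordProj[p] (Nat.card G) :=
      Nat.Coprime.dvd_of_dvd_mul_right (hl ▸ hcompl.pow_left l) (hdvd g)
    simpa using pow_eq_pow_iff_modEq.mpr (he1.of_dvd hproj)
  · have hdvd_compl : orderOf g ∣ ordCompl[p] (Nat.card G) :=
      Nat.Coprime.dvd_of_dvd_mul_left (hg.pow_right _) (hdvd g)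
    exact orderOf_dvd_iff_pow_eq_one.mp (hdvd_compl.trans (Nat.modEq_zero_iff_dvd.mp he0))

structure IsProjectionExponents {G ι : Type*} [Group G] (S : ι → Subgroup G) (e : ι → ℕ) :
    Prop where
  pow_eq_self : ∀ i, ∀ s ∈ S i, s ^ e i = s
  pow_eq_one : ∀ i j, j ≠ i → ∀ s ∈ S j, s ^ e i = 1

theorem exists_isProjectionExponents {G ι : Type*} [Group G] [Finite G] {p : ι → ℕ}
    (hp : ∀ i, (p i).Prime) (hpne : Function.Injective p) {S : ι → Subgroup G}
    (hS : ∀ i, IsPGroup (p i) (S i)) : ∃ e, IsProjectionExponents S e := by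
  choose e hself hone using fun i => exists_pow_eq_self_and_pow_eq_one G (hp i)
  refine ⟨e, fun i s hs => ?_, fun i j hji s hs => hone i s ?_⟩
  · obtain ⟨k, hk⟩ := isPGroup_iff_orderOf_dvd_pow.mp (hS i) ⟨s, hs⟩
    exact hself i s k (by rwa [orderOf_mk] at hk)
  · have hcop : (p j).Coprime (p i) := (Nat.coprime_primes (hp j) (hp i)).mpr (hpne.ne hji)
    simpa only [orderOf_mk] using (hS j).orderOf_coprime hcop ⟨s, hs⟩

section CommGroup

variable {A : Type*} [CommGroup A]

def SplitsFrom (x : A) (G : Subgroup A) : Prop :=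
  ∃ H ≤ G, zpowers x ⊓ H = ⊥ ∧ zpowers x ⊔ H = G

theorem splitsFrom_one (G : Subgroup A) : SplitsFrom 1 G :=
  ⟨G, le_rfl, by simp [zpowers_one_eq_bot], by simp [zpowers_one_eq_bot]⟩

theorem splitsFrom_top_iff (x : A) :
    SplitsFrom x ⊤ ↔ ∃ H : Subgroup A, zpowers x ⊓ H = ⊥ ∧ zpowers x ⊔ H = ⊤ := by
  simp [SplitsFrom]

theorem SplitsFrom.pow {x : A} {G S : Subgroup A} {e : ℕ} (h : SplitsFrom x G) (hSG : S ≤ G)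
    (hmaps : ∀ a ∈ G, a ^ e ∈ S) (hfix : ∀ s ∈ S, s ^ e = s) : SplitsFrom (x ^ e) S := by
  obtain ⟨H, hHG, hinf, hsup⟩ := h
  have hxG : x ∈ G := hsup ▸ mem_sup_left (mem_zpowers x)
  refine ⟨H ⊓ S, inf_le_right, ?_, ?_⟩
  · rw [eq_bot_iff, ← hinf]
    exact inf_le_inf (zpowers_le.mpr (npow_mem_zpowers x e)) inf_le_left
  refine le_antisymm (sup_le (zpowers_le.mpr (hmaps x hxG)) inf_le_right) fun s hs => ?_
  obtain ⟨y, hy, z, hz, rfl⟩ := mem_sup.mp (hsup ▸ hSG hs : s ∈ zpowers x ⊔ H)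
  obtain ⟨k, rfl⟩ := mem_zpowers_iff.mp hy
  rw [← hfix _ hs, mul_pow, ← zpow_natCast (x ^ k), zpow_comm, zpow_natCast]
  exact mul_mem_sup (zpow_mem_zpowers _ k) ⟨H.pow_mem hz e, hmaps z (hHG hz)⟩

namespace IsProjectionExponents

variable {ι : Type*} {S : ι → Subgroup A} {e : ι → ℕ}

theorem pow_mem_of_mem_iSup (he : IsProjectionExponents S e) {K : ι → Subgroup A}
    (hK : ∀ i, K i ≤ S i) (i : ι) {a : A} (ha : a ∈ ⨆ j, K j) : a ^ e i ∈ K i := by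
  refine iSup_induction K (C := fun a => a ^ e i ∈ K i) ha (fun j s hs => ?_)
    (by simp) fun a b ha hb => by simpa only [mul_pow] using mul_mem ha hb
  obtain rfl | hji := eq_or_ne j i
  · rwa [he.pow_eq_self j s (hK j hs)]
  · rw [he.pow_eq_one i j hji s (hK j hs)]
    exact (K i).one_mem

theorem prod_pow [Fintype ι] (he : IsProjectionExponents S e) {c : ι → A}
    (hc : ∀ i, c i ∈ S i) (i : ι) : (∏ j, c j) ^ e i = c i := by
  rw [← Finset.prod_pow, Finset.prod_eq_single i
    (fun j _ hji => he.pow_eq_one i j hji (c j) (hc j)) (by simp)]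
  exact he.pow_eq_self i (c i) (hc i)

theorem splitsFrom_prod_iff [Fintype ι] (he : IsProjectionExponents S e) {c : ι → A}
    (hc : ∀ i, c i ∈ S i) :
    SplitsFrom (∏ i, c i) (⨆ i, S i) ↔ ∀ i, SplitsFrom (c i) (S i) := by
  refine ⟨fun h i => he.prod_pow hc i ▸ h.pow (le_iSup S i)
    (fun a ha => he.pow_mem_of_mem_iSup (fun _ => le_rfl) i ha) (he.pow_eq_self i), fun h => ?_⟩
  choose K hKS hKinf hKsup using h
  have hcx (i : ι) : c i ∈ zpowers (∏ j, c j) := he.prod_pow hc i ▸ npow_mem_zpowers _ _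
  refine ⟨⨆ i, K i, iSup_mono hKS, ?_, ?_⟩
  · rw [eq_bot_iff]
    rintro _ ⟨hk, hK⟩
    obtain ⟨k, rfl⟩ := mem_zpowers_iff.mp hk
    have hck (i : ι) : c i ^ k = 1 := by
      have hmem : c i ^ k ∈ zpowers (c i) ⊓ K i := by
        refine ⟨zpow_mem_zpowers _ k, ?_⟩
        rw [← he.prod_pow hc i, ← zpow_natCast, zpow_comm, zpow_natCast]
        exact he.pow_mem_of_mem_iSup hKS i hK
      rwa [hKinf i] at hmem
    simp [← Finset.prod_zpow, hck]
  · refine le_antisymm (sup_le ?_ (iSup_mono hKS)) (iSup_le fun i => ?_)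
    · exact zpowers_le.mpr (prod_mem fun i _ => mem_iSup_of_mem i (hc i))
    · rw [← hKsup i]
      exact sup_le_sup (zpowers_le.mpr (hcx i)) (le_iSup K i)

end IsProjectionExponents

end CommGroup

theorem split_iff_components_split_sylow_general {A : Type*} [CommGroup A] [Finite A]
    {m : ℕ} (p : Fin m → ℕ) (hp : ∀ i, (p i).Prime) (hpne : Function.Injective p)
    (S : Fin m → Subgroup A)
    (hS : ∀ i, IsPGroup (p i) (S i))
    (hsup : ⨆ i, S i = ⊤)
    (x : A) (c : Fin m → A) (hc : ∀ i, c i ∈ S i) (hxc : x = ∏ i, c i) :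
    (∃ H : Subgroup A, Subgroup.zpowers x ⊓ H = ⊥ ∧ Subgroup.zpowers x ⊔ H = ⊤) ↔
      ∀ i, c i = 1 ∨
        ∃ H : Subgroup A, H ≤ S i ∧ Subgroup.zpowers (c i) ⊓ H = ⊥ ∧
          Subgroup.zpowers (c i) ⊔ H = S i := by
  obtain ⟨e, he⟩ := exists_isProjectionExponents hp hpne hS
  calc (∃ H : Subgroup A, zpowers x ⊓ H = ⊥ ∧ zpowers x ⊔ H = ⊤)
      ↔ SplitsFrom x ⊤ := (splitsFrom_top_iff x).symm
    _ ↔ ∀ i, SplitsFrom (c i) (S i) := by rw [← hsup, hxc]; exact he.splitsFrom_prod_iff hc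
    _ ↔ ∀ i, c i = 1 ∨ SplitsFrom (c i) (S i) :=
      forall_congr' fun i => (or_iff_right_of_imp fun h => h ▸ splitsFrom_one (S i)).symm

/-- Let `A` be a finite abelian group decomposed as the internal direct product of its
Sylow subgroups `S i` (so `S i` is a `p i`-group for pairwise distinct primes `p i`).
A nontrivial element `x` with components `c i ∈ S i` splits from `A` iff each component
`c i` is either trivial or splits from `S i`. -/
theorem split_iff_components_split_sylow {A : Type*} [CommGroup A] [Finite A]
    {m : ℕ} (p : Fin m → ℕ) (hp : ∀ i, (p i).Prime) (hpne : Function.Injective p)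
    (S : Fin m → Subgroup A)
    (hS : ∀ i, IsPGroup (p i) (S i))
    (hindep : iSupIndep S)
    (hsup : ⨆ i, S i = ⊤)
    (x : A) (hx : x ≠ 1) (c : Fin m → A) (hc : ∀ i, c i ∈ S i) (hxc : x = ∏ i, c i) :
    (∃ H : Subgroup A, Subgroup.zpowers x ⊓ H = ⊥ ∧ Subgroup.zpowers x ⊔ H = ⊤) ↔
      ∀ i, c i = 1 ∨
        ∃ H : Subgroup A, H ≤ S i ∧ Subgroup.zpowers (c i) ⊓ H = ⊥ ∧
          Subgroup.zpowers (c i) ⊔ H = S i :=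
  split_iff_components_split_sylow_general p hp hpne S hS hsup x c hc hxc
end

section
/- Let G be a finite group and z ∈ Z(G). Then z splits from G if and only if the coset zG′ splits from the abelianization G/G′ and ⟨z⟩ ∩ G′ = {1}. -/
/-!
A normal complement `H` of `⟨z⟩` already contains `G'`, since `G/H` is a quotient of the
cyclic group `⟨z⟩`. Hence `⟨z⟩ ∩ G' ≤ ⟨z⟩ ∩ H = 1`, and complements of `⟨z⟩` containing `G'`
correspond under `G → G/G'` to complements of `⟨zG'⟩`: a complement is pushed forward along a
surjection whose kernel it contains, and pulled back along a surjection whose kernel meets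
`⟨z⟩` trivially.
-/

namespace Subgroup

variable {G Q : Type*} [Group G] [Group Q] {f : G →* Q}

theorem isCompl_map_of_ker_le (hf : Function.Surjective f) {A H : Subgroup G}
    (h : IsCompl A H) (hker : f.ker ≤ H) : IsCompl (A.map f) (H.map f) := by
  constructor
  · rw [disjoint_def]
    rintro _ ⟨a, ha, rfl⟩ ⟨b, hb, hba⟩
    have hab : b⁻¹ * a ∈ H := hker <| by simp [MonoidHom.mem_ker, hba]
    have haH : a ∈ H := by simpa using H.mul_mem hb hab
    rw [disjoint_def.mp h.disjoint ha haH, map_one]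
  · rw [codisjoint_iff, ← map_sup, h.sup_eq_top, map_top_of_surjective f hf]

theorem isCompl_comap_of_isCompl_map (hf : Function.Surjective f) {A : Subgroup G}
    {K : Subgroup Q} (h : IsCompl (A.map f) K) (hA : Disjoint A f.ker) :
    IsCompl A (K.comap f) := by
  constructor
  · rw [disjoint_def]
    intro x hxA hxK
    have hfx : f x = 1 := disjoint_def.mp h.disjoint (mem_map_of_mem f hxA) hxK
    exact disjoint_def.mp hA hxA hfx
  · rw [codisjoint_iff, ← sup_eq_right.mpr (f.ker_le_comap K), ← sup_assoc, ← comap_map_eq f A,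
      comap_sup_eq f _ _ hf, h.sup_eq_top, comap_top]

end Subgroup

theorem central_split_iff_abelianization_general {G : Type*} [Group G]
    (z : G) :
    (∃ H : Subgroup G, H.Normal ∧ Subgroup.zpowers z ⊓ H = ⊥ ∧
        Subgroup.zpowers z ⊔ H = ⊤) ↔
      ((∃ H : Subgroup (Abelianization G),
          Subgroup.zpowers (Abelianization.of z) ⊓ H = ⊥ ∧
          Subgroup.zpowers (Abelianization.of z) ⊔ H = ⊤) ∧
        Subgroup.zpowers z ⊓ commutator G = ⊥) := by
  have hof : Function.Surjective (Abelianization.of : G →* Abelianization G) :=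
    QuotientGroup.mk'_surjective _
  constructor
  · rintro ⟨H, hH, hinf, hsup⟩
    have hcompl : IsCompl (Subgroup.zpowers z) H :=
      ⟨disjoint_iff.mpr hinf, codisjoint_iff.mpr hsup⟩
    have hG' : commutator G ≤ H :=
      hH.commutator_le_of_self_sup_commutative_eq_top (by rwa [sup_comm]) inferInstance
    have hbar :=
      Subgroup.isCompl_map_of_ker_le hof hcompl ((Abelianization.ker_of G).trans_le hG')
    rw [MonoidHom.map_zpowers] at hbar
    exact ⟨⟨_, hbar.inf_eq_bot, hbar.sup_eq_top⟩, (hcompl.disjoint.mono_right hG').eq_bot⟩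
  · rintro ⟨⟨K, hinf, hsup⟩, hzG'⟩
    have hcompl : IsCompl ((Subgroup.zpowers z).map Abelianization.of) K := by
      rw [MonoidHom.map_zpowers]
      exact ⟨disjoint_iff.mpr hinf, codisjoint_iff.mpr hsup⟩
    have hlift := Subgroup.isCompl_comap_of_isCompl_map hof hcompl <| by
      rwa [Abelianization.ker_of, disjoint_iff]
    exact ⟨K.comap Abelianization.of, inferInstance, hlift.inf_eq_bot, hlift.sup_eq_top⟩

/-- A central element `z` of a finite group `G` splits from `G` (i.e. `G = ⟨z⟩ × H`
for some normal subgroup `H`) iff its image in the abelianization `G/G'` splits from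
`G/G'` and `⟨z⟩ ∩ G' = 1`. -/
theorem central_split_iff_abelianization {G : Type*} [Group G] [Finite G]
    (z : G) (hz : z ∈ Subgroup.center G) :
    (∃ H : Subgroup G, H.Normal ∧ Subgroup.zpowers z ⊓ H = ⊥ ∧
        Subgroup.zpowers z ⊔ H = ⊤) ↔
      ((∃ H : Subgroup (Abelianization G),
          Subgroup.zpowers (Abelianization.of z) ⊓ H = ⊥ ∧
          Subgroup.zpowers (Abelianization.of z) ⊔ H = ⊤) ∧
        Subgroup.zpowers z ⊓ commutator G = ⊥) :=
  central_split_iff_abelianization_general z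
end

section
/- Let U ≤ G be finite groups and x ∈ Z(G) ∩ U. If x splits from G then x splits from U. -/
open scoped Pointwise

namespace Subgroup

variable {G : Type*} [Group G]

/-- Dedekind's modular law, for a normal subgroup `N`. -/
theorem sup_inf_eq_inf_sup_of_le {K U : Subgroup G} (N : Subgroup G) [N.Normal] (hKU : K ≤ U) :
    K ⊔ (N ⊓ U) = U ⊓ (K ⊔ N) := by
  refine le_antisymm
    (sup_le (le_inf hKU le_sup_left) (inf_comm N U ▸ inf_le_inf_left U le_sup_right)) ?_
  intro g hg
  have hg' : g ∈ (K : Set G) * (N ⊓ U : Subgroup G) := by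
    rw [mul_inf_assoc K N U hKU, ← mul_normal]
    exact ⟨hg.2, hg.1⟩
  obtain ⟨k, hk, n, hn, rfl⟩ := hg'
  exact mul_mem_sup hk hn

theorem conj_mem_inf_of_normal {U N : Subgroup G} [hN : N.Normal] {u h : G} (hu : u ∈ U)
    (hh : h ∈ U ⊓ N) : u * h * u⁻¹ ∈ U ⊓ N :=
  ⟨U.mul_mem (U.mul_mem hu hh.1) (U.inv_mem hu), hN.conj_mem h hh.2 u⟩

end Subgroup

theorem central_split_of_subgroup_general {G : Type*} [Group G]
    (U : Subgroup G) (x : G) (hxU : x ∈ U)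
    (hsplit : ∃ H : Subgroup G, H.Normal ∧ Subgroup.zpowers x ⊓ H = ⊥ ∧
      Subgroup.zpowers x ⊔ H = ⊤) :
    ∃ H : Subgroup G, H ≤ U ∧ (∀ u ∈ U, ∀ h ∈ H, u * h * u⁻¹ ∈ H) ∧
      Subgroup.zpowers x ⊓ H = ⊥ ∧ Subgroup.zpowers x ⊔ H = U := by
  obtain ⟨H, hN, hinf, hsup⟩ := hsplit
  refine ⟨U ⊓ H, inf_le_left, fun u hu h hh ↦ Subgroup.conj_mem_inf_of_normal hu hh, ?_, ?_⟩
  · exact eq_bot_iff.2 (hinf ▸ inf_le_inf_left _ inf_le_right)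
  · rw [inf_comm, Subgroup.sup_inf_eq_inf_sup_of_le H (Subgroup.zpowers_le.2 hxU), hsup,
      inf_top_eq]

/-- If `U ≤ G` are finite groups and `x ∈ Z(G) ∩ U` splits from `G`
(`G = ⟨x⟩ × H` for a normal subgroup `H`), then `x` splits from `U`:
there is `H ≤ U`, normalized by `U`, with `⟨x⟩ ⊓ H = ⊥` and `⟨x⟩ ⊔ H = U`. -/
theorem central_split_of_subgroup {G : Type*} [Group G] [Finite G]
    (U : Subgroup G) (x : G) (hxZ : x ∈ Subgroup.center G) (hxU : x ∈ U)
    (hsplit : ∃ H : Subgroup G, H.Normal ∧ Subgroup.zpowers x ⊓ H = ⊥ ∧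
      Subgroup.zpowers x ⊔ H = ⊤) :
    ∃ H : Subgroup G, H ≤ U ∧ (∀ u ∈ U, ∀ h ∈ H, u * h * u⁻¹ ∈ H) ∧
      Subgroup.zpowers x ⊓ H = ⊥ ∧ Subgroup.zpowers x ⊔ H = U :=
  central_split_of_subgroup_general U x hxU hsplit
end

section
/- Let G = G₁ × G₂ be a direct product of finite groups and z = (z₁, z₂) ∈ Z(G) a p-element. Then z splits from G if and only if there exists i ∈ {1,2} such that the order of zᵢ equals the order of z and zᵢ splits from Gᵢ. -/
/-! A normal complement to `⟨x⟩` is the same as a homomorphism `G →* ⟨x⟩` fixing `x`. If `f` is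
one for `z = (z₁, z₂)`, write `f (z₁, 1) = z ^ a` and `f (1, z₂) = z ^ b`. Then `z ^ (a + b) = z`,
so `a + b` is a unit modulo the `p`-power `orderOf z`, hence so is `a` or `b`, say `a`. Since
`z ^ a` is an image of `z₁`, this forces `orderOf z₁ = orderOf z`; transporting `f (·, 1)` along
`⟨z⟩ ≅ ⟨z₁⟩` and raising it to the power `a⁻¹` gives a homomorphism `G₁ →* ⟨z₁⟩` fixing `z₁`.
Conversely, such a homomorphism for a `zᵢ` of the same order as `z`, precomposed with the
projection and transported along `⟨zᵢ⟩ ≅ ⟨z⟩`, is one for `z`. -/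

open Subgroup

def Splits {G : Type*} [Group G] (x : G) : Prop :=
  ∃ H : Subgroup G, H.Normal ∧ zpowers x ⊓ H = ⊥ ∧ zpowers x ⊔ H = ⊤

lemma Int.isCoprime_or_isCoprime_of_isCoprime_add_prime_pow {p n : ℕ} (hp : p.Prime)
    {a b : ℤ} (h : IsCoprime (a + b) (p ^ n : ℕ)) :
    IsCoprime a (p ^ n : ℕ) ∨ IsCoprime b (p ^ n : ℕ) := by
  rcases n.eq_zero_or_pos with rfl | hn
  · simp [isCoprime_one_right]
  simp only [Nat.cast_pow, IsCoprime.pow_right_iff hn, isCoprime_comm (y := (p : ℤ)),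
    (Nat.prime_iff_prime_int.mp hp).coprime_iff_not_dvd] at h ⊢
  by_contra! hab
  exact h (dvd_add hab.1 hab.2)

section

variable {G K : Type*} [Group G] [Group K]

lemma exists_zpowers_hom_of_orderOf_dvd (x : G) (y : K) (h : orderOf y ∣ orderOf x) :
    ∃ θ : zpowers x →* K, θ ⟨x, mem_zpowers x⟩ = y := by
  have hgen : ∀ g : zpowers x, g ∈ zpowers (⟨x, mem_zpowers x⟩ : zpowers x) := by
    rintro ⟨_, k, rfl⟩
    exact ⟨k, Subtype.ext (by simp)⟩
  exact ⟨monoidHomOfForallMemZpowers hgen (by rwa [orderOf_mk]),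
    monoidHomOfForallMemZpowers_apply_gen hgen _⟩

lemma isCoprime_orderOf_of_zpow_eq_self {x : G} {k : ℤ} (h : x ^ k = x) :
    IsCoprime k (orderOf x) := by
  obtain ⟨c, hc⟩ := Int.modEq_iff_dvd.mp (zpow_eq_zpow_iff_modEq.mp (h.trans (zpow_one x).symm))
  exact ⟨1, c, by linarith⟩

lemma coe_apply_eq_self_of_mem_zpowers {x : G} {r : G →* zpowers x} (hr : (r x : G) = x)
    {g : G} (hg : g ∈ zpowers x) : (r g : G) = g := by
  obtain ⟨k, rfl⟩ := hg
  simp [hr]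

lemma splits_iff_exists_retraction (x : G) :
    Splits x ↔ ∃ r : G →* zpowers x, (r x : G) = x := by
  constructor
  · rintro ⟨H, hH, hinf, hsup⟩
    have hc : (zpowers x).IsComplement' H :=
      isComplement'_of_disjoint_and_mul_eq_univ (disjoint_iff.mpr hinf)
        (by rw [← mul_normal, hsup, coe_top])
    refine ⟨hc.QuotientMulEquiv.toMonoidHom.comp (QuotientGroup.mk' H), ?_⟩
    have hx : hc.QuotientMulEquiv (x : G ⧸ H) = ⟨x, mem_zpowers x⟩ := by
      -- the inverse of `QuotientMulEquiv` is `QuotientGroup.mk` by construction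
      rw [← MulEquiv.eq_symm_apply]
      rfl
    simp [hx]
  · rintro ⟨r, hr⟩
    have hfix : ∀ g, r (r g : G) = r g := fun g =>
      Subtype.ext (coe_apply_eq_self_of_mem_zpowers hr (r g).2)
    refine ⟨r.ker, inferInstance, eq_bot_iff.mpr ?_, eq_top_iff.mpr ?_⟩
    · rintro g ⟨hgx, hgr⟩
      rw [mem_bot, ← coe_apply_eq_self_of_mem_zpowers hr hgx, MonoidHom.mem_ker.mp hgr]
      rfl
    · intro g _
      have hker : (r g : G)⁻¹ * g ∈ r.ker := by simp [hfix]
      simpa using mul_mem_sup (r g).2 hker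

lemma splits_of_apply_self_eq_zpow {x : G} (r : G →* zpowers x) {a : ℤ}
    (hr : (r x : G) = x ^ a) (ha : IsCoprime a (orderOf x)) : Splits x := by
  obtain ⟨u, v, huv⟩ := ha
  obtain ⟨θ, hθ⟩ := exists_zpowers_hom_of_orderOf_dvd x (⟨x, mem_zpowers x⟩ ^ u : zpowers x)
    (orderOf_dvd_of_pow_eq_one (by
      rw [← zpow_natCast, ← zpow_mul, mul_comm, zpow_mul, zpow_natCast,
        ← orderOf_mk x (mem_zpowers x), pow_orderOf_eq_one, one_zpow]))
  refine (splits_iff_exists_retraction x).mpr ⟨θ.comp r, ?_⟩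
  have hr' : r x = ⟨x, mem_zpowers x⟩ ^ a := Subtype.ext (by simpa using hr)
  have hua : x ^ (u * a) = x ^ (1 : ℤ) :=
    zpow_eq_zpow_iff_modEq.mpr (Int.modEq_iff_dvd.mpr ⟨v, by linarith⟩)
  simpa [hr', hθ, ← zpow_mul] using hua

lemma Splits.of_map (ψ : G →* K) {z : G} (h : orderOf (ψ z) = orderOf z)
    (hs : Splits (ψ z)) : Splits z := by
  obtain ⟨r, hr⟩ := (splits_iff_exists_retraction _).mp hs
  obtain ⟨θ, hθ⟩ := exists_zpowers_hom_of_orderOf_dvd (ψ z) (⟨z, mem_zpowers z⟩ : zpowers z)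
    (by rw [orderOf_mk, h])
  refine (splits_iff_exists_retraction z).mpr ⟨θ.comp (r.comp ψ), ?_⟩
  have hr' : r (ψ z) = ⟨ψ z, mem_zpowers _⟩ := Subtype.ext hr
  simp [hr', hθ]

lemma orderOf_eq_and_splits_of_map_eq_zpow {z : G} (f : G →* zpowers z) (φ : K →* G)
    {x : K} (hxz : orderOf x ∣ orderOf z) {a : ℤ} (ha : (f (φ x) : G) = z ^ a)
    (hcop : IsCoprime a (orderOf z)) : orderOf x = orderOf z ∧ Splits x := by
  have hzx : orderOf z ∣ orderOf x := by
    have hdvd : (orderOf z : ℤ) ∣ a * orderOf x := by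
      rw [orderOf_dvd_iff_zpow_eq_one, zpow_mul, ← ha, zpow_natCast, ← SubgroupClass.coe_pow,
        ← map_pow, ← map_pow, pow_orderOf_eq_one, map_one, map_one, OneMemClass.coe_one]
    exact_mod_cast hcop.symm.dvd_of_dvd_mul_left hdvd
  have hord := Nat.dvd_antisymm hxz hzx
  obtain ⟨θ, hθ⟩ := exists_zpowers_hom_of_orderOf_dvd z (⟨x, mem_zpowers x⟩ : zpowers x)
    (by rw [orderOf_mk, hord])
  refine ⟨hord, splits_of_apply_self_eq_zpow (θ.comp (f.comp φ)) (a := a) ?_ (hord ▸ hcop)⟩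
  have ha' : f (φ x) = ⟨z, mem_zpowers z⟩ ^ a := Subtype.ext (by simpa using ha)
  simp [ha', hθ]

end

theorem central_pelement_split_prod_iff_general {G₁ G₂ : Type*} [Group G₁] [Group G₂]
    {p : ℕ} [Fact p.Prime]
    (z : G₁ × G₂)
    (hzp : ∃ n : ℕ, orderOf z = p ^ n) :
    (∃ H : Subgroup (G₁ × G₂), H.Normal ∧ Subgroup.zpowers z ⊓ H = ⊥ ∧
        Subgroup.zpowers z ⊔ H = ⊤) ↔
      ((orderOf z.1 = orderOf z ∧
          ∃ H : Subgroup G₁, H.Normal ∧ Subgroup.zpowers z.1 ⊓ H = ⊥ ∧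
            Subgroup.zpowers z.1 ⊔ H = ⊤) ∨
        (orderOf z.2 = orderOf z ∧
          ∃ H : Subgroup G₂, H.Normal ∧ Subgroup.zpowers z.2 ⊓ H = ⊥ ∧
            Subgroup.zpowers z.2 ⊔ H = ⊤)) := by
  change Splits z ↔
    (orderOf z.1 = orderOf z ∧ Splits z.1) ∨ (orderOf z.2 = orderOf z ∧ Splits z.2)
  refine ⟨fun hs => ?_, ?_⟩
  · obtain ⟨f, hf⟩ := (splits_iff_exists_retraction z).mp hs
    obtain ⟨a, ha⟩ := mem_zpowers_iff.mp (f (z.1, 1)).2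
    obtain ⟨b, hb⟩ := mem_zpowers_iff.mp (f (1, z.2)).2
    have hab : IsCoprime (a + b) (orderOf z) := by
      refine isCoprime_orderOf_of_zpow_eq_self ?_
      rw [zpow_add, ha, hb, ← coe_mul, ← map_mul, Prod.mk_mul_mk, mul_one, one_mul, hf]
    obtain ⟨n, hn⟩ := hzp
    rw [hn] at hab
    rcases Int.isCoprime_or_isCoprime_of_isCoprime_add_prime_pow Fact.out hab with hcop | hcop
    · exact .inl (orderOf_eq_and_splits_of_map_eq_zpow f (.inl G₁ G₂) orderOf_fst_dvd_orderOf
        ha.symm (hn ▸ hcop))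
    · exact .inr (orderOf_eq_and_splits_of_map_eq_zpow f (.inr G₁ G₂) orderOf_snd_dvd_orderOf
        hb.symm (hn ▸ hcop))
  · rintro (⟨h, hs⟩ | ⟨h, hs⟩)
    · exact hs.of_map (.fst G₁ G₂) h
    · exact hs.of_map (.snd G₁ G₂) h

/-- Let `G = G₁ × G₂` be a direct product of finite groups and `z = (z₁, z₂)` a
central `p`-element of `G`. Then `z` splits from `G` iff for some `i ∈ {1,2}` the
component `zᵢ` has the same order as `z` and splits from `Gᵢ`. -/
theorem central_pelement_split_prod_iff {G₁ G₂ : Type*} [Group G₁] [Group G₂]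
    [Finite G₁] [Finite G₂] {p : ℕ} [Fact p.Prime]
    (z : G₁ × G₂) (hz : z ∈ Subgroup.center (G₁ × G₂))
    (hzp : ∃ n : ℕ, orderOf z = p ^ n) :
    (∃ H : Subgroup (G₁ × G₂), H.Normal ∧ Subgroup.zpowers z ⊓ H = ⊥ ∧
        Subgroup.zpowers z ⊔ H = ⊤) ↔
      ((orderOf z.1 = orderOf z ∧
          ∃ H : Subgroup G₁, H.Normal ∧ Subgroup.zpowers z.1 ⊓ H = ⊥ ∧
            Subgroup.zpowers z.1 ⊔ H = ⊤) ∨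
        (orderOf z.2 = orderOf z ∧
          ∃ H : Subgroup G₂, H.Normal ∧ Subgroup.zpowers z.2 ⊓ H = ⊥ ∧
            Subgroup.zpowers z.2 ⊔ H = ⊤)) :=
  central_pelement_split_prod_iff_general z hzp
end

section
/- Let G be a finite non-abelian group. Then the non-commuting graph of G restricted to G ∖ Z(G) is connected: for any two non-central elements g, h there is a path g = x₀, x₁, …, xₙ = h of non-central elements with [xᵢ, xᵢ₊₁] ≠ 1 for all i. -/
/-! Any two non-central elements are at distance at most two: their centralizers are proper
subgroups, and a group is never the union of two proper subgroups, so some element commutes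
with neither of them. -/

namespace Subgroup

theorem exists_notMem_centralizer_singleton_of_notMem_center {G : Type*} [Group G] {g h : G}
    (hg : g ∉ center G) (hh : h ∉ center G) :
    ∃ x, x ∉ centralizer {g} ∧ x ∉ centralizer {h} := by
  by_contra! hcover
  have hunion : ((⊤ : Subgroup G) : Set G) ⊆ centralizer {g} ∪ centralizer {h} :=
    fun x _ => or_iff_not_imp_left.mpr (hcover x)
  rcases SubgroupClass.subset_union.mp hunion with hle | hle
  · exact hg (centralizer_eq_top_iff_subset.mp (top_le_iff.mp hle) rfl)
  · exact hh (centralizer_eq_top_iff_subset.mp (top_le_iff.mp hle) rfl)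

end Subgroup

theorem noncommuting_graph_connected_general {G : Type*} [Group G]
    (g h : G) (hg : g ∉ Subgroup.center G) (hh : h ∉ Subgroup.center G) :
    Relation.ReflTransGen
      (fun a b : G => a ∉ Subgroup.center G ∧ b ∉ Subgroup.center G ∧ a * b ≠ b * a)
      g h := by
  obtain ⟨x, hxg, hxh⟩ := Subgroup.exists_notMem_centralizer_singleton_of_notMem_center hg hh
  rw [Subgroup.mem_centralizer_singleton_iff] at hxg hxh
  have hx : x ∉ Subgroup.center G := fun hx => hxg (Subgroup.mem_center_iff.mp hx g).symm
  exact .head ⟨hg, hx, Ne.symm hxg⟩ (.single ⟨hx, hh, hxh⟩)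

/-- The non-commuting graph of a finite non-abelian group `G`, restricted to the
non-central elements, is connected: any two non-central elements are joined by a path
of non-central elements in which consecutive elements do not commute. -/
theorem noncommuting_graph_connected {G : Type*} [Group G] [Finite G]
    (hG : ¬ ∀ a b : G, a * b = b * a)
    (g h : G) (hg : g ∉ Subgroup.center G) (hh : h ∉ Subgroup.center G) :
    Relation.ReflTransGen
      (fun a b : G => a ∉ Subgroup.center G ∧ b ∉ Subgroup.center G ∧ a * b ≠ b * a)
      g h :=
  noncommuting_graph_connected_general g h hg hh
end

section
/- Let G be a finite non-abelian group and let N₁, …, Nₘ be the non-abelian components of G (the subgroups generated by the connected components of the non-commuting graph restricted to the set M constructed by the greedy centralizer-order procedure). Then G = N₁⋯Nₘ is a central decomposition of G: the Nᵢ pairwise centralize each other, generate G, each Nᵢ contains Z(G), and each Nᵢ is non-abelian. -/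
section NonAbelianComponents

variable (G : Type*) [Group G]

/-- Stages of the greedy construction of the set `M`: `greedyM 0` is the set of
non-central elements of maximal centralizer order; `greedyM (n+1)` additionally
contains the non-central elements outside `⟨greedyM n⟩` of maximal centralizer order
among those. -/
def greedyM : ℕ → Set G
  | 0 => {g | g ∉ Subgroup.center G ∧ ∀ h : G, h ∉ Subgroup.center G →
      Nat.card (Subgroup.centralizer {h}) ≤ Nat.card (Subgroup.centralizer {g})}
  | (n + 1) => greedyM n ∪
      {g | g ∉ Subgroup.center G ∧ g ∉ Subgroup.closure (greedyM n) ∧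
        ∀ h : G, h ∉ Subgroup.center G → h ∉ Subgroup.closure (greedyM n) →
          Nat.card (Subgroup.centralizer {h}) ≤ Nat.card (Subgroup.centralizer {g})}

/-- The stable result `M` of the greedy construction. -/
def greedyMset : Set G := ⋃ n, greedyM G n

/-- Adjacency in the non-commuting graph restricted to `M`. -/
def ncAdj (a b : G) : Prop := a ∈ greedyMset G ∧ b ∈ greedyMset G ∧ a * b ≠ b * a

/-- The connected component of `g` in the non-commuting graph on `M`. -/
def ncComponent (g : G) : Set G :=
  {h ∈ greedyMset G | Relation.ReflTransGen (ncAdj G) g h}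

/-- The non-abelian component of `G` associated with `g ∈ M`: the subgroup generated
by the connected component of `g` in the non-commuting graph on `M`. -/
def nonAbelianComponent (g : G) : Subgroup G := Subgroup.closure (ncComponent G g)

end NonAbelianComponents

/-! Multiplying by a central element changes neither centralizers nor non-centrality, so every
stage of the greedy construction, hence `M`, is a union of cosets of `Z(G)`. Once the
construction is stable every non-central element lies in `⟨M⟩`, and a subgroup containing the
complement of a proper subgroup is everything, so `⟨M⟩ = G`. Hence each `g ∈ M` has a
non-commuting partner `m ∈ M`, and `g ∼ m ∼ z g` for every central `z`: this puts `Z(G)` into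
the component of `g` and makes it non-abelian. Unconnected components commute on generators,
hence commute. -/

open Subgroup

section Centralizers

variable {G : Type*} [Group G]

theorem Subgroup.centralizer_singleton_mul_of_mem_center {z : G} (hz : z ∈ center G) (g : G) :
    centralizer {z * g} = centralizer {g} := by
  ext c
  rw [mem_centralizer_singleton_iff, mem_centralizer_singleton_iff, ← mul_assoc,
    mem_center_iff.mp hz c, mul_assoc, mul_assoc, mul_left_cancel_iff]

theorem Subgroup.eq_top_of_compl_subset {H K : Subgroup G} (hK : K ≠ ⊤)
    (h : (K : Set G)ᶜ ⊆ H) : H = ⊤ := by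
  obtain ⟨b, hb⟩ : ∃ b, b ∉ K := by simpa [eq_top_iff'] using hK
  refine (eq_top_iff' H).mpr fun a => ?_
  by_cases ha : a ∈ K
  · exact (H.mul_mem_cancel_right (h hb)).mp (h ((K.mul_mem_cancel_left ha).not.mpr hb))
  · exact h ha

theorem Subgroup.center_le_closure_of_center_mul_mem {S : Set G} (hS : S.Nonempty)
    (h : ∀ z ∈ center G, ∀ g ∈ S, z * g ∈ S) : center G ≤ closure S := by
  obtain ⟨s, hs⟩ := hS
  intro z hz
  simpa using mul_mem (subset_closure (h z hz s hs)) (inv_mem (subset_closure hs))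

theorem Subgroup.commute_of_mem_closure {S T : Set G} (h : ∀ x ∈ S, ∀ y ∈ T, x * y = y * x)
    {a b : G} (ha : a ∈ closure S) (hb : b ∈ closure T) : a * b = b * a := by
  have hT : closure T ≤ centralizer (closure S) := by
    rw [centralizer_closure, closure_le]
    exact fun y hy x hx => h x hx y hy
  exact hT hb a ha

end Centralizers

section GreedyM

variable {G : Type*} [Group G]

theorem greedyM_monotone : Monotone (greedyM G) :=
  monotone_nat_of_le_succ fun _ => Set.subset_union_left

theorem greedyM_subset_greedyMset (n : ℕ) : greedyM G n ⊆ greedyMset G :=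
  Set.subset_iUnion (greedyM G) n

theorem notMem_center_of_mem_greedyM {g : G} : ∀ {n : ℕ}, g ∈ greedyM G n → g ∉ center G
  | 0, hg => hg.1
  | _ + 1, .inl hg => notMem_center_of_mem_greedyM hg
  | _ + 1, .inr hg => hg.1

theorem notMem_center_of_mem_greedyMset {g : G} (hg : g ∈ greedyMset G) : g ∉ center G := by
  obtain ⟨n, hn⟩ := Set.mem_iUnion.mp hg
  exact notMem_center_of_mem_greedyM hn

variable [Finite G]

theorem greedyM_zero_nonempty (hG : center G ≠ ⊤) : (greedyM G 0).Nonempty := by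
  obtain ⟨g₀, hg₀⟩ : ∃ g, g ∉ center G := by simpa [eq_top_iff'] using hG
  obtain ⟨g, hg, hmax⟩ := Set.exists_max_image {g : G | g ∉ center G}
    (fun g => Nat.card (centralizer {g})) (Set.toFinite _) ⟨g₀, hg₀⟩
  exact ⟨g, hg, hmax⟩

theorem center_mul_mem_greedyM (hG : center G ≠ ⊤) {z : G} (hz : z ∈ center G) :
    ∀ {n : ℕ} {g : G}, g ∈ greedyM G n → z * g ∈ greedyM G n
  | 0, g, ⟨hg, hmax⟩ => by
    refine ⟨fun h => hg ((mul_mem_cancel_left hz).mp h), fun h hh => ?_⟩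
    rw [centralizer_singleton_mul_of_mem_center hz]
    exact hmax h hh
  | n + 1, g, .inl hg => .inl (center_mul_mem_greedyM hG hz hg)
  | n + 1, g, .inr ⟨hg, hgM, hmax⟩ => by
    have hzM : z ∈ closure (greedyM G n) :=
      center_le_closure_of_center_mul_mem
        ((greedyM_zero_nonempty hG).mono (greedyM_monotone n.zero_le))
        (fun z' hz' _ hg' => center_mul_mem_greedyM hG hz' hg') hz
    refine .inr ⟨fun h => hg ((mul_mem_cancel_left hz).mp h),
      fun h => hgM ((mul_mem_cancel_left hzM).mp h), fun h hh hhM => ?_⟩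
    rw [centralizer_singleton_mul_of_mem_center hz]
    exact hmax h hh hhM

theorem center_mul_mem_greedyMset (hG : center G ≠ ⊤) {z g : G} (hz : z ∈ center G)
    (hg : g ∈ greedyMset G) : z * g ∈ greedyMset G := by
  obtain ⟨n, hn⟩ := Set.mem_iUnion.mp hg
  exact Set.mem_iUnion.mpr ⟨n, center_mul_mem_greedyM hG hz hn⟩

theorem exists_greedyM_succ_eq : ∃ n, greedyM G (n + 1) = greedyM G n := by
  obtain ⟨n, hn⟩ := WellFoundedGT.monotone_chain_condition ⟨greedyM G, greedyM_monotone⟩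
  exact ⟨n, (hn (n + 1) n.le_succ).symm⟩

/-- Once the construction is stable, no non-central element is left outside `⟨M⟩`: otherwise one
of maximal centralizer order among them would have been added at the next stage. -/
theorem compl_center_subset_closure_greedyM {n : ℕ} (hn : greedyM G (n + 1) = greedyM G n) :
    (center G : Set G)ᶜ ⊆ closure (greedyM G n) := by
  by_contra hsub
  obtain ⟨g, ⟨hgZ, hgM⟩, hmax⟩ := Set.exists_max_image
    {g : G | g ∉ center G ∧ g ∉ closure (greedyM G n)}
    (fun g => Nat.card (centralizer {g})) (Set.toFinite _) (Set.not_subset.mp hsub)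
  have hg : g ∈ greedyM G (n + 1) := .inr ⟨hgZ, hgM, fun h hhZ hhM => hmax h ⟨hhZ, hhM⟩⟩
  exact hgM (subset_closure (hn ▸ hg))

theorem closure_greedyMset_eq_top (hG : center G ≠ ⊤) : closure (greedyMset G) = ⊤ := by
  obtain ⟨n, hn⟩ := exists_greedyM_succ_eq (G := G)
  refine eq_top_mono (closure_mono (greedyM_subset_greedyMset n)) ?_
  exact eq_top_of_compl_subset hG (compl_center_subset_closure_greedyM hn)

theorem exists_mem_greedyMset_mul_ne (hG : center G ≠ ⊤) {g : G} (hg : g ∈ greedyMset G) :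
    ∃ m ∈ greedyMset G, g * m ≠ m * g := by
  by_contra! hcomm
  apply notMem_center_of_mem_greedyMset hg
  rw [← centralizer_univ, ← coe_top, ← closure_greedyMset_eq_top hG, centralizer_closure]
  exact fun m hm => (hcomm m hm).symm

end GreedyM

section Components

variable {G : Type*} [Group G]

instance : Std.Symm (ncAdj G) where
  symm _ _ h := ⟨h.2.1, h.1, h.2.2 ∘ Eq.symm⟩

theorem mem_nonAbelianComponent {g h : G} (hh : h ∈ greedyMset G)
    (hgh : Relation.ReflTransGen (ncAdj G) g h) : h ∈ nonAbelianComponent G g :=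
  subset_closure ⟨hh, hgh⟩

theorem mem_nonAbelianComponent_self {g : G} (hg : g ∈ greedyMset G) :
    g ∈ nonAbelianComponent G g :=
  mem_nonAbelianComponent hg .refl

theorem commute_of_mem_nonAbelianComponent {g h : G}
    (hgh : ¬ Relation.ReflTransGen (ncAdj G) g h) {a b : G}
    (ha : a ∈ nonAbelianComponent G g) (hb : b ∈ nonAbelianComponent G h) : a * b = b * a := by
  refine commute_of_mem_closure (fun x hx y hy => ?_) ha hb
  by_contra hxy
  exact hgh ((hx.2.tail ⟨hx.1, hy.1, hxy⟩).trans (Std.Symm.symm _ _ hy.2))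

variable [Finite G]

theorem exists_ncAdj (hG : center G ≠ ⊤) {g : G} (hg : g ∈ greedyMset G) :
    ∃ m, ncAdj G g m := by
  obtain ⟨m, hm, hgm⟩ := exists_mem_greedyMset_mul_ne hG hg
  exact ⟨m, hg, hm, hgm⟩

/-- If `m` does not commute with `g`, it does not commute with `z * g` either, so
`g ~ m ~ z * g` and `z = (z * g) * g⁻¹` lies in the component of `g`. -/
theorem center_le_nonAbelianComponent (hG : center G ≠ ⊤) {g : G} (hg : g ∈ greedyMset G) :
    center G ≤ nonAbelianComponent G g := by
  intro z hz
  obtain ⟨m, hgm⟩ := exists_ncAdj hG hg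
  have hmzg : ncAdj G m (z * g) := by
    refine ⟨hgm.2.1, center_mul_mem_greedyMset hG hz hg, fun h => hgm.2.2 ?_⟩
    rwa [← mul_assoc, mem_center_iff.mp hz m, mul_assoc, mul_assoc, mul_left_cancel_iff,
      eq_comm] at h
  have hzg : z * g ∈ nonAbelianComponent G g :=
    mem_nonAbelianComponent hmzg.2.1 ((Relation.ReflTransGen.single hgm).tail hmzg)
  simpa using mul_mem hzg (inv_mem (mem_nonAbelianComponent_self hg))

theorem exists_mul_ne_of_mem_nonAbelianComponent (hG : center G ≠ ⊤) {g : G}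
    (hg : g ∈ greedyMset G) :
    ∃ a ∈ nonAbelianComponent G g, ∃ b ∈ nonAbelianComponent G g, a * b ≠ b * a := by
  obtain ⟨m, hgm⟩ := exists_ncAdj hG hg
  exact ⟨g, mem_nonAbelianComponent_self hg, m,
    mem_nonAbelianComponent hgm.2.1 (.single hgm), hgm.2.2⟩

theorem iSup_nonAbelianComponent_eq_top (hG : center G ≠ ⊤) :
    (⨆ g ∈ greedyMset G, nonAbelianComponent G g) = ⊤ := by
  rw [eq_top_iff, ← closure_greedyMset_eq_top hG, closure_le]
  exact fun g hg => mem_iSup_of_mem g (mem_iSup_of_mem hg (mem_nonAbelianComponent_self hg))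

end Components

/-- For a finite non-abelian group `G`, the non-abelian components form a central
decomposition of `G`: they generate `G`, components of non-connected elements
centralize each other, each contains the center, and each is non-abelian. -/
theorem nonabelian_components_central_decomposition
    {G : Type*} [Group G] [Finite G] (hG : ¬ ∀ a b : G, a * b = b * a) :
    (⨆ g ∈ greedyMset G, nonAbelianComponent G g) = ⊤ ∧
    (∀ g ∈ greedyMset G, ∀ h ∈ greedyMset G, ¬ Relation.ReflTransGen (ncAdj G) g h →
      ∀ a ∈ nonAbelianComponent G g, ∀ b ∈ nonAbelianComponent G h, a * b = b * a) ∧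
    (∀ g ∈ greedyMset G, Subgroup.center G ≤ nonAbelianComponent G g) ∧
    (∀ g ∈ greedyMset G, ∃ a ∈ nonAbelianComponent G g,
      ∃ b ∈ nonAbelianComponent G g, a * b ≠ b * a) := by
  have hZ : center G ≠ ⊤ := fun h => hG fun a b => mem_center_iff.mp (h ▸ mem_top b) a
  exact ⟨iSup_nonAbelianComponent_eq_top hZ,
    fun _ _ _ _ hgh _ ha _ hb => commute_of_mem_nonAbelianComponent hgh ha hb,
    fun _ hg => center_le_nonAbelianComponent hZ hg,
    fun _ hg => exists_mul_ne_of_mem_nonAbelianComponent hZ hg⟩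
end

section
/- Let f : A → B be a bijection of finite sets, and let P = {A₁,…,A_t} and Q = {B₁,…,B_t} be partitions of A and B respectively into parts all of the same size m. Then A can be partitioned as A = R₁ ⊎ ⋯ ⊎ R_m where each Rᵢ is a full system of representatives of A modulo P (one element from each Aⱼ), and each image f(Rᵢ) is a full system of representatives of B modulo Q. -/
/-!
View each `a ∈ A` as an edge from the part of `a` in `P` to the part of `f a` in `Q`: this is
an `m`-regular bipartite multigraph on `t + t` vertices. Counting elements shows that any `k`
parts of `P` meet at least `k` parts of `Q`, so Hall's theorem yields a perfect matching, i.e.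
a common transversal `R`. Removing `R` leaves an `(m - 1)`-regular multigraph; induct on `m`.
-/

open Finset

section

variable {α ι : Type*} [DecidableEq ι]

/-- `HasFiberCard p s 1` says that `s` is a full system of representatives modulo `p`. -/
def HasFiberCard (p : α → ι) (s : Finset α) (n : ℕ) : Prop :=
  ∀ j, #{a ∈ s | p a = j} = n

namespace HasFiberCard

variable {p q : α → ι} {s R : Finset α} {n : ℕ}

theorem card_filter_mem (h : HasFiberCard p s n) (S : Finset ι) :
    #{a ∈ s | p a ∈ S} = #S * n := by
  rw [card_eq_sum_card_fiberwise (s := {a ∈ s | p a ∈ S}) (f := p) (t := S)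
    fun a ha => (mem_filter.1 ha).2, sum_const_nat fun j hj => ?_]
  rw [filter_filter, ← h j]
  congr 1
  exact filter_congr fun a _ => ⟨And.right, fun hpa => ⟨hpa ▸ hj, hpa⟩⟩

theorem eq_empty (h : HasFiberCard p s 0) : s = ∅ :=
  eq_empty_of_forall_notMem fun a ha =>
    notMem_empty a (card_eq_zero.1 (h (p a)) ▸ mem_filter.2 ⟨ha, rfl⟩)

theorem existsUnique (h : HasFiberCard p s 1) (j : ι) : ∃! a, a ∈ s ∧ p a = j := by
  simpa using card_eq_one_iff_existsUnique.1 (h j)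

theorem sdiff [DecidableEq α] (hs : HasFiberCard p s (n + 1)) (hR : HasFiberCard p R 1)
    (hRs : R ⊆ s) : HasFiberCard p (s \ R) n := by
  intro j
  have : {a ∈ s \ R | p a = j} = {a ∈ s | p a = j} \ {a ∈ R | p a = j} := by
    ext a; simp only [mem_filter, mem_sdiff]; tauto
  rw [this, card_sdiff_of_subset (filter_subset_filter _ hRs), hs j, hR j, Nat.add_sub_cancel]

theorem image_univ_of_bijective_comp [DecidableEq α] {κ : Type*} [Fintype κ] {g : κ → α}
    (hg : (p ∘ g).Bijective) : HasFiberCard p (univ.image g) 1 := by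
  intro j
  obtain ⟨k, hk⟩ := hg.2 j
  rw [card_eq_one]
  refine ⟨g k, ?_⟩
  ext a
  simp only [mem_filter, mem_image, mem_univ, true_and, mem_singleton]
  constructor
  · rintro ⟨⟨k', rfl⟩, hk'⟩
    rw [hg.1 (hk'.trans hk.symm)]
  · rintro rfl
    exact ⟨⟨k, rfl⟩, hk⟩

end HasFiberCard

open HasFiberCard

variable {p q : α → ι} {s : Finset α} {n : ℕ}

theorem exists_common_transversal [Fintype ι] (hp : HasFiberCard p s (n + 1))
    (hq : HasFiberCard q s (n + 1)) :
    ∃ R ⊆ s, HasFiberCard p R 1 ∧ HasFiberCard q R 1 := by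
  classical
  let T : ι → Finset ι := fun j => image q {a ∈ s | p a = j}
  -- The `p`-parts indexed by `S` lie inside the `q`-parts indexed by `S.biUnion T`.
  have hall : ∀ S : Finset ι, #S ≤ #(S.biUnion T) := by
    intro S
    have hsub : {a ∈ s | p a ∈ S} ⊆ {a ∈ s | q a ∈ S.biUnion T} := by
      intro a ha
      simp only [mem_filter] at ha ⊢
      exact ⟨ha.1, mem_biUnion.2 ⟨p a, ha.2, mem_image_of_mem q (mem_filter.2 ⟨ha.1, rfl⟩)⟩⟩
    have := card_le_card hsub
    rw [hp.card_filter_mem, hq.card_filter_mem] at this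
    exact Nat.le_of_mul_le_mul_right this n.succ_pos
  obtain ⟨σ, hσ, hσT⟩ := (all_card_le_biUnion_card_iff_exists_injective T).1 hall
  have hrep : ∀ j, ∃ a ∈ s, p a = j ∧ q a = σ j := fun j => by
    obtain ⟨a, ha, hqa⟩ := mem_image.1 (hσT j)
    exact ⟨a, (mem_filter.1 ha).1, (mem_filter.1 ha).2, hqa⟩
  choose g hgs hgp hgq using hrep
  refine ⟨univ.image g, ?_, image_univ_of_bijective_comp ?_, image_univ_of_bijective_comp ?_⟩
  · simp [subset_iff, hgs]
  · exact (funext hgp : p ∘ g = id) ▸ Function.bijective_id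
  · exact (funext hgq : q ∘ g = σ) ▸ Finite.injective_iff_bijective.1 hσ

-- Stated for `n + 1` colours: with `Fin 0` no colouring of `α` exists unless `α` is empty.
theorem exists_transversal_coloring_succ [Fintype ι] [DecidableEq α] (n : ℕ) {s : Finset α}
    (hp : HasFiberCard p s (n + 1)) (hq : HasFiberCard q s (n + 1)) :
    ∃ c : α → Fin (n + 1), ∀ i,
      HasFiberCard p {a ∈ s | c a = i} 1 ∧ HasFiberCard q {a ∈ s | c a = i} 1 := by
  induction n generalizing s with
  | zero =>
    refine ⟨fun _ => 0, fun i => ?_⟩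
    obtain rfl : i = 0 := Fin.fin_one_eq_zero i
    simpa using ⟨hp, hq⟩
  | succ n ih =>
    obtain ⟨R, hRs, hpR, hqR⟩ := exists_common_transversal hp hq
    obtain ⟨c, hc⟩ := ih (hp.sdiff hpR hRs) (hq.sdiff hqR hRs)
    let c' : α → Fin (n + 2) := fun a => if a ∈ R then Fin.last _ else (c a).castSucc
    refine ⟨c', Fin.lastCases ?_ fun i => ?_⟩
    · have : {a ∈ s | c' a = Fin.last _} = R := by
        ext a
        by_cases ha : a ∈ R
        · simp [c', ha, hRs ha]
        · simp [c', ha, Fin.castSucc_ne_last]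
      rw [this]
      exact ⟨hpR, hqR⟩
    · have : {a ∈ s | c' a = i.castSucc} = {a ∈ s \ R | c a = i} := by
        ext a
        by_cases ha : a ∈ R <;> simp [c', ha, (Fin.castSucc_ne_last i).symm]
      rw [this]
      exact hc i

theorem exists_transversal_coloring [Fintype α] [Fintype ι] (hp : HasFiberCard p univ n)
    (hq : HasFiberCard q univ n) :
    ∃ c : α → Fin n, ∀ i,
      HasFiberCard p {a | c a = i} 1 ∧ HasFiberCard q {a | c a = i} 1 := by
  classical
  cases n with
  | zero =>
    have : IsEmpty α := ⟨fun a => notMem_empty a (hp.eq_empty ▸ mem_univ a)⟩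
    exact ⟨isEmptyElim, isEmptyElim⟩
  | succ n => exact exists_transversal_coloring_succ n hp hq

end

theorem equipartition_common_representatives_general {A B : Type*} [Fintype A] [Fintype B]
    (f : A ≃ B) {t m : ℕ}
    (pA : A → Fin t) (pB : B → Fin t)
    (hA : ∀ j : Fin t, (Finset.univ.filter fun a => pA a = j).card = m)
    (hB : ∀ j : Fin t, (Finset.univ.filter fun b => pB b = j).card = m) :
    ∃ c : A → Fin m,
      (∀ (i : Fin m) (j : Fin t), ∃! a : A, c a = i ∧ pA a = j) ∧
      (∀ (i : Fin m) (j : Fin t), ∃! a : A, c a = i ∧ pB (f a) = j) := by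
  have hB' : HasFiberCard (pB ∘ f) univ m := fun j => hB j ▸ card_equiv f (by simp)
  obtain ⟨c, hc⟩ := exists_transversal_coloring hA hB'
  exact ⟨c, fun i j => by simpa using (hc i).1.existsUnique j,
    fun i j => by simpa using (hc i).2.existsUnique j⟩

/-- Let `f : A ≃ B` be a bijection of finite sets with equipartitions `pA : A → Fin t`
and `pB : B → Fin t`, all parts of size `m`. Then `A` can be partitioned into `m`
classes (the fibers of some `c : A → Fin m`) such that each class is a full system of
representatives of the partition `pA`, and the image under `f` of each class is a full
system of representatives of the partition `pB`. -/
theorem equipartition_common_representatives {A B : Type*} [Fintype A] [Fintype B]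
    [DecidableEq A] [DecidableEq B] (f : A ≃ B) {t m : ℕ}
    (pA : A → Fin t) (pB : B → Fin t)
    (hA : ∀ j : Fin t, (Finset.univ.filter fun a => pA a = j).card = m)
    (hB : ∀ j : Fin t, (Finset.univ.filter fun b => pB b = j).card = m) :
    ∃ c : A → Fin m,
      (∀ (i : Fin m) (j : Fin t), ∃! a : A, c a = i ∧ pA a = j) ∧
      (∀ (i : Fin m) (j : Fin t), ∃! a : A, c a = i ∧ pB (f a) = j) :=
  equipartition_common_representatives_general f pA pB hA hB
end
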